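/- arXiv:1906.10936 — 3 statements merged into one kernel-verified Lean document; each statement's English description precedes it below -/
import Mathlib

section
/- Let M = (E, ρ) be a matroid with top cyclic flat 1_Z = cyc(E), and let F ⊆ 1_Z be a flat of M with ρ(F) = ρ(1_Z) − 2. Let Υ(F) = { X ∈ Z(M) : ρ(1_Z) − 1 = ρ(X) + |F − X| } and let Ῡ(F) be the set of inclusion-maximal elements of Υ(F). Then the number of flats H of M with F ⊊ H ⊊ 1_Z equals |1_Z − F| − Σ_{Z ∈ Ῡ(F)} (|Z − F| − 1). -/
open Finset

structure FinMatroid (α : Type*) [DecidableEq α] where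
  E : Finset α
  rk : Finset α → ℕ
  rk_le_card : ∀ A, A ⊆ E → rk A ≤ A.card
  rk_mono : ∀ A B, A ⊆ B → B ⊆ E → rk A ≤ rk B
  rk_submod : ∀ A B, A ⊆ E → B ⊆ E → rk (A ∪ B) + rk (A ∩ B) ≤ rk A + rk B

namespace FinMatroid

variable {α : Type*} [DecidableEq α]

/-- The closure operator `cl(A) = {e ∈ E : ρ(A ∪ {e}) = ρ(A)}`. -/
def cl (M : FinMatroid α) (A : Finset α) : Finset α :=
  M.E.filter fun e => M.rk (insert e A) = M.rk A

/-- The cyclic operator `cyc(A) = {e ∈ A : ρ(A − {e}) = ρ(A)}`. -/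
def cyc (M : FinMatroid α) (A : Finset α) : Finset α :=
  A.filter fun e => M.rk (A.erase e) = M.rk A

/-- A flat is a set fixed by the closure operator. -/
def IsFlat (M : FinMatroid α) (F : Finset α) : Prop :=
  F ⊆ M.E ∧ M.cl F = F

/-- A cyclic set is a set fixed by the cyclic operator. -/
def IsCyclic (M : FinMatroid α) (U : Finset α) : Prop :=
  U ⊆ M.E ∧ M.cyc U = U

/-- A cyclic flat is a set fixed by both the closure and the cyclic operators. -/
def IsCyclicFlat (M : FinMatroid α) (Z : Finset α) : Prop :=
  Z ⊆ M.E ∧ M.cl Z = Z ∧ M.cyc Z = Z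

/-- The minor `M|Y/X`: restriction to `Y` followed by contraction of `X`. -/
def minor (M : FinMatroid α) (X Y : Finset α) (hXY : X ⊆ Y) (hY : Y ⊆ M.E) :
    FinMatroid α where
  E := Y \ X
  rk A := M.rk (A ∪ X) - M.rk X
  rk_le_card := by
    intro A hA
    have hAE : A ⊆ M.E := fun a ha => hY (mem_sdiff.mp (hA ha)).1
    have hXE : X ⊆ M.E := hXY.trans hY
    have h1 := M.rk_submod A X hAE hXE
    have h2 := M.rk_le_card A hAE
    show M.rk (A ∪ X) - M.rk X ≤ A.card
    omega
  rk_mono := by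
    intro A B hAB hB
    have hBE : B ⊆ M.E := fun a ha => hY (mem_sdiff.mp (hB ha)).1
    have hBX : B ∪ X ⊆ M.E := union_subset hBE (hXY.trans hY)
    have := M.rk_mono (A ∪ X) (B ∪ X) (union_subset_union hAB Subset.rfl) hBX
    show M.rk (A ∪ X) - M.rk X ≤ M.rk (B ∪ X) - M.rk X
    omega
  rk_submod := by
    intro A B hA hB
    have hAE : A ⊆ M.E := fun a ha => hY (mem_sdiff.mp (hA ha)).1
    have hBE : B ⊆ M.E := fun a ha => hY (mem_sdiff.mp (hB ha)).1
    have hXE : X ⊆ M.E := hXY.trans hY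
    have hAX : A ∪ X ⊆ M.E := union_subset hAE hXE
    have hBX : B ∪ X ⊆ M.E := union_subset hBE hXE
    have hsub := M.rk_submod (A ∪ X) (B ∪ X) hAX hBX
    have e1 : (A ∪ X) ∪ (B ∪ X) = (A ∪ B) ∪ X := by
      ext x; simp only [mem_union]; tauto
    have e2 : (A ∪ X) ∩ (B ∪ X) = (A ∩ B) ∪ X := by
      ext x; simp only [mem_union, mem_inter]; tauto
    rw [e1, e2] at hsub
    have h1 : M.rk X ≤ M.rk (A ∪ X) := M.rk_mono X _ subset_union_right hAX
    have h2 : M.rk X ≤ M.rk (B ∪ X) := M.rk_mono X _ subset_union_right hBX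
    have hIX : (A ∩ B) ∪ X ⊆ M.E := union_subset (inter_subset_left.trans hAE) hXE
    have hUX : (A ∪ B) ∪ X ⊆ M.E := union_subset (union_subset hAE hBE) hXE
    have h3 : M.rk X ≤ M.rk ((A ∩ B) ∪ X) := M.rk_mono X _ subset_union_right hIX
    have h4 : M.rk X ≤ M.rk ((A ∪ B) ∪ X) := M.rk_mono X _ subset_union_right hUX
    show M.rk ((A ∪ B) ∪ X) - M.rk X + (M.rk ((A ∩ B) ∪ X) - M.rk X) ≤
      (M.rk (A ∪ X) - M.rk X) + (M.rk (B ∪ X) - M.rk X)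
    omega

/-- The restriction `M|Y`. -/
def restrict (M : FinMatroid α) (Y : Finset α) (hY : Y ⊆ M.E) : FinMatroid α where
  E := Y
  rk := M.rk
  rk_le_card := fun A hA => M.rk_le_card A (hA.trans hY)
  rk_mono := fun A B hAB hB => M.rk_mono A B hAB (hB.trans hY)
  rk_submod := fun A B hA hB => M.rk_submod A B (hA.trans hY) (hB.trans hY)

/-- `M` is binary: it is the matroid of linear dependence of a family of
vectors over the field with two elements. -/
def IsBinary (M : FinMatroid α) : Prop :=
  ∃ (m : ℕ) (φ : α → (Fin m → ZMod 2)),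
    ∀ A : Finset α, A ⊆ M.E →
      M.rk A = Module.finrank (ZMod 2) (Submodule.span (ZMod 2) (φ '' (A : Set α)))

def Simple (M : FinMatroid α) : Prop :=
  (∀ e ∈ M.E, M.rk {e} = 1) ∧
    ∀ e ∈ M.E, ∀ f ∈ M.E, e ≠ f → M.rk ({e, f} : Finset α) = 2

def NoIsthmus (M : FinMatroid α) : Prop :=
  ∀ e ∈ M.E, M.rk (M.E.erase e) = M.rk M.E

def IsMinDist (M : FinMatroid α) (d : ℕ) : Prop :=
  (∃ X ⊆ M.E, M.rk (M.E \ X) < M.rk M.E ∧ X.card = d) ∧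
    ∀ X ⊆ M.E, M.rk (M.E \ X) < M.rk M.E → d ≤ X.card

def IsAtomCF (M : FinMatroid α) (Z : Finset α) : Prop :=
  M.IsCyclicFlat Z ∧ Z ≠ ∅ ∧ ¬ ∃ Z', M.IsCyclicFlat Z' ∧ ∅ ⊂ Z' ∧ Z' ⊂ Z

def IsCoatomCF (M : FinMatroid α) (Z : Finset α) : Prop :=
  M.IsCyclicFlat Z ∧ Z ⊂ M.E ∧ ¬ ∃ Z', M.IsCyclicFlat Z' ∧ Z ⊂ Z' ∧ Z' ⊂ M.E

def IsCircuit (M : FinMatroid α) (C : Finset α) : Prop :=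
  C ⊆ M.E ∧ M.rk C < C.card ∧ ∀ D ⊂ C, M.rk D = D.card

end FinMatroid

namespace FinMatroid

variable {α : Type*} [DecidableEq α] (M : FinMatroid α)

lemma rk_insert_le' {A : Finset α} {e : α} (h : insert e A ⊆ M.E) :
    M.rk (insert e A) ≤ M.rk A + 1 := by
  have heE : e ∈ M.E := h (mem_insert_self e A)
  have hAE : A ⊆ M.E := (subset_insert e A).trans h
  have h1 := M.rk_submod {e} A (by simpa using heE) hAE
  have h2 : M.rk {e} ≤ 1 := by simpa using M.rk_le_card {e} (by simpa using heE)
  have h3 : ({e} : Finset α) ∪ A = insert e A := by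
    ext x; simp [mem_insert]
  rw [h3] at h1
  omega

lemma rk_insert_ge {A : Finset α} {e : α} (h : insert e A ⊆ M.E) :
    M.rk A ≤ M.rk (insert e A) :=
  M.rk_mono A _ (subset_insert e A) h

lemma rk_union_le' {A : Finset α} (B : Finset α) (h : A ∪ B ⊆ M.E) :
    M.rk (A ∪ B) ≤ M.rk A + (B \ A).card := by
  induction B using Finset.induction with
  | empty => simp
  | @insert f B' hf ih =>
    have h' : A ∪ B' ⊆ M.E := fun x hx => by
      rcases mem_union.mp hx with hx | hx
      · exact h (mem_union_left _ hx)
      · exact h (mem_union_right _ (mem_insert_of_mem hx))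
    by_cases hfA : f ∈ A
    · have e1 : A ∪ insert f B' = A ∪ B' := by
        ext x; simp only [mem_union, mem_insert]
        constructor
        · rintro (hx | rfl | hx) <;> simp_all
        · rintro (hx | hx) <;> simp_all
      have e2 : insert f B' \ A = B' \ A := by
        ext x; simp only [mem_sdiff, mem_insert]
        constructor
        · rintro ⟨rfl | hx, hxA⟩ <;> simp_all
        · rintro ⟨hx, hxA⟩; exact ⟨Or.inr hx, hxA⟩
      rw [e1, e2]; exact ih h'
    · have e1 : A ∪ insert f B' = insert f (A ∪ B') := by
        ext x; simp only [mem_union, mem_insert]; tauto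
      have e2 : insert f B' \ A = insert f (B' \ A) := by
        ext x; simp only [mem_sdiff, mem_insert]
        constructor
        · rintro ⟨rfl | hx, hxA⟩
          · exact Or.inl rfl
          · exact Or.inr ⟨hx, hxA⟩
        · rintro (rfl | ⟨hx, hxA⟩)
          · exact ⟨Or.inl rfl, hfA⟩
          · exact ⟨Or.inr hx, hxA⟩
      rw [e1, e2]
      have hsub : insert f (A ∪ B') ⊆ M.E := by rw [← e1]; exact h
      have hfB'A : f ∉ B' \ A := fun hmem => hf (mem_sdiff.mp hmem).1
      rw [card_insert_of_notMem hfB'A]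
      have := M.rk_insert_le' hsub
      have := ih h'
      omega

lemma mem_cl_iff {A : Finset α} {e : α} :
    e ∈ M.cl A ↔ e ∈ M.E ∧ M.rk (insert e A) = M.rk A := mem_filter

lemma cl_subset_ground (A : Finset α) : M.cl A ⊆ M.E := filter_subset _ _

lemma subset_cl {A : Finset α} (h : A ⊆ M.E) : A ⊆ M.cl A := fun e he =>
  (M.mem_cl_iff).mpr ⟨h he, by rw [insert_eq_self.mpr he]⟩

lemma rk_union_cl {A S : Finset α} (hA : A ⊆ M.E) (hS : S ⊆ M.cl A) :
    M.rk (A ∪ S) = M.rk A := by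
  induction S using Finset.induction with
  | empty => simp
  | @insert f S' hf ih =>
    have hS' : S' ⊆ M.cl A := (subset_insert f S').trans hS
    have hfcl : f ∈ M.cl A := hS (mem_insert_self f S')
    obtain ⟨hfE, hfrk⟩ := (M.mem_cl_iff).mp hfcl
    have hAS' : A ∪ S' ⊆ M.E := union_subset hA (hS'.trans (M.cl_subset_ground A))
    have hfAE : insert f A ⊆ M.E := insert_subset hfE hA
    have hsub := M.rk_submod (A ∪ S') (insert f A) hAS' hfAE
    have e1 : (A ∪ S') ∪ insert f A = insert f (A ∪ S') := by
      ext x; simp only [mem_union, mem_insert]; tauto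
    rw [e1] at hsub
    have hAsubI : A ⊆ (A ∪ S') ∩ insert f A :=
      subset_inter subset_union_left (subset_insert f A)
    have hIE : (A ∪ S') ∩ insert f A ⊆ M.E := inter_subset_right.trans hfAE
    have h2 : M.rk A ≤ M.rk ((A ∪ S') ∩ insert f A) := M.rk_mono _ _ hAsubI hIE
    have e2 : A ∪ insert f S' = insert f (A ∪ S') := by
      ext x; simp only [mem_union, mem_insert]; tauto
    have hbig : insert f (A ∪ S') ⊆ M.E := insert_subset hfE hAS'
    have h3 : M.rk (A ∪ S') ≤ M.rk (insert f (A ∪ S')) :=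
      M.rk_mono _ _ (subset_insert _ _) hbig
    have ihv := ih hS'
    rw [e2]
    omega

lemma rk_cl {A : Finset α} (h : A ⊆ M.E) : M.rk (M.cl A) = M.rk A := by
  have := M.rk_union_cl h (Subset.rfl : M.cl A ⊆ M.cl A)
  rwa [union_eq_right.mpr (M.subset_cl h)] at this

lemma cl_mono {A B : Finset α} (hAB : A ⊆ B) (hB : B ⊆ M.E) : M.cl A ⊆ M.cl B := by
  intro e he
  obtain ⟨heE, hrk⟩ := (M.mem_cl_iff).mp he
  refine (M.mem_cl_iff).mpr ⟨heE, ?_⟩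
  have hAE : A ⊆ M.E := hAB.trans hB
  have hiA : insert e A ⊆ M.E := insert_subset heE hAE
  have hiB : insert e B ⊆ M.E := insert_subset heE hB
  have hsub := M.rk_submod (insert e A) B hiA hB
  have e1 : insert e A ∪ B = insert e B := by
    ext x; simp only [mem_union, mem_insert]
    constructor
    · rintro ((rfl | hx) | hx)
      · exact Or.inl rfl
      · exact Or.inr (hAB hx)
      · exact Or.inr hx
    · rintro (rfl | hx)
      · exact Or.inl (Or.inl rfl)
      · exact Or.inr hx
  rw [e1] at hsub
  have hAsubI : A ⊆ insert e A ∩ B := subset_inter (subset_insert e A) hAB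
  have h2 : M.rk A ≤ M.rk (insert e A ∩ B) :=
    M.rk_mono _ _ hAsubI (inter_subset_right.trans hB)
  have h3 : M.rk B ≤ M.rk (insert e B) := M.rk_insert_ge hiB
  omega

lemma cl_cl {A : Finset α} (h : A ⊆ M.E) : M.cl (M.cl A) = M.cl A := by
  apply Subset.antisymm
  · intro e he
    obtain ⟨heE, hrk⟩ := (M.mem_cl_iff).mp he
    refine (M.mem_cl_iff).mpr ⟨heE, ?_⟩
    have h1 : M.rk (insert e A) ≤ M.rk (insert e (M.cl A)) :=
      M.rk_mono _ _ (insert_subset_insert e (M.subset_cl h))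
        (insert_subset heE (M.cl_subset_ground A))
    have h2 : M.rk A ≤ M.rk (insert e A) :=
      M.rk_insert_ge (insert_subset heE h)
    rw [hrk, M.rk_cl h] at h1
    omega
  · exact M.subset_cl (M.cl_subset_ground A)

lemma flat_ext {H₁ H₂ : Finset α} (h1 : M.cl H₁ = H₁) (hsub : H₁ ⊆ H₂)
    (h2 : H₂ ⊆ M.E) (hrk : M.rk H₂ ≤ M.rk H₁) : H₂ = H₁ := by
  refine Subset.antisymm (fun x hx => ?_) hsub
  have hins : insert x H₁ ⊆ M.E := insert_subset (h2 hx) (hsub.trans h2)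
  have hle : M.rk (insert x H₁) ≤ M.rk H₂ :=
    M.rk_mono _ _ (insert_subset hx hsub) h2
  have hge : M.rk H₁ ≤ M.rk (insert x H₁) := M.rk_insert_ge hins
  have : x ∈ M.cl H₁ := (M.mem_cl_iff).mpr ⟨h2 hx, by omega⟩
  rwa [h1] at this

lemma mem_cyc_iff {X : Finset α} {e : α} :
    e ∈ M.cyc X ↔ e ∈ X ∧ M.rk (X.erase e) = M.rk X := mem_filter

lemma cyc_subset (X : Finset α) : M.cyc X ⊆ X := filter_subset _ _

lemma rk_erase_or {X : Finset α} {e : α} (he : e ∈ X) (hX : X ⊆ M.E) :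
    M.rk (X.erase e) = M.rk X ∨ M.rk (X.erase e) + 1 = M.rk X := by
  have h1 : insert e (X.erase e) = X := insert_erase he
  have h2 : insert e (X.erase e) ⊆ M.E := by rw [h1]; exact hX
  have h3 := M.rk_insert_le' h2
  have h4 := M.rk_insert_ge h2
  rw [h1] at h3 h4
  omega

lemma isthmus_transfer {X Y : Finset α} {e : α} (he : e ∈ X) (hXY : X ⊆ Y)
    (hY : Y ⊆ M.E) (hiso : M.rk (Y.erase e) + 1 = M.rk Y) :
    M.rk (X.erase e) + 1 = M.rk X := by
  have hsub := M.rk_submod X (Y.erase e) (hXY.trans hY) ((erase_subset e Y).trans hY)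
  have e1 : X ∪ Y.erase e = Y := by
    ext x; simp only [mem_union, mem_erase]
    constructor
    · rintro (hx | ⟨_, hx⟩)
      · exact hXY hx
      · exact hx
    · intro hx
      by_cases hxe : x = e
      · exact Or.inl (hxe ▸ he)
      · exact Or.inr ⟨hxe, hx⟩
  have e2 : X ∩ Y.erase e = X.erase e := by
    ext x; simp only [mem_inter, mem_erase]
    constructor
    · rintro ⟨hx, hne, _⟩; exact ⟨hne, hx⟩
    · rintro ⟨hne, hx⟩; exact ⟨hx, hne, hXY hx⟩
  rw [e1, e2] at hsub
  rcases M.rk_erase_or he (hXY.trans hY) with h | h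
  · omega
  · exact h

lemma nonisthmus_up {X Y : Finset α} {e : α} (he : e ∈ X) (hXY : X ⊆ Y)
    (hY : Y ⊆ M.E) (hn : M.rk (X.erase e) = M.rk X) :
    M.rk (Y.erase e) = M.rk Y := by
  rcases M.rk_erase_or (hXY he) hY with h | h
  · exact h
  · have := M.isthmus_transfer he hXY hY h
    omega

lemma cyc_mono {X Y : Finset α} (hXY : X ⊆ Y) (hY : Y ⊆ M.E) :
    M.cyc X ⊆ M.cyc Y := by
  intro e he
  obtain ⟨heX, hrk⟩ := (M.mem_cyc_iff).mp he
  exact (M.mem_cyc_iff).mpr ⟨hXY heX, M.nonisthmus_up heX hXY hY hrk⟩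

lemma two_erase {X : Finset α} {e f : α} (hef : e ≠ f) (he : e ∈ X) (hf : f ∈ X)
    (hX : X ⊆ M.E) (hne : M.rk (X.erase e) = M.rk X)
    (hif : M.rk (X.erase f) + 1 = M.rk X) :
    M.rk ((X.erase e).erase f) + 1 = M.rk (X.erase e) := by
  have hsub := M.rk_submod (X.erase e) (X.erase f)
    ((erase_subset e X).trans hX) ((erase_subset f X).trans hX)
  have e1 : X.erase e ∪ X.erase f = X := by
    ext x; simp only [mem_union, mem_erase]
    constructor
    · rintro (⟨_, hx⟩ | ⟨_, hx⟩) <;> exact hx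
    · intro hx
      by_cases hxe : x = e
      · exact Or.inr ⟨by rw [hxe]; exact hef, hx⟩
      · exact Or.inl ⟨hxe, hx⟩
  have e2 : X.erase e ∩ X.erase f = (X.erase e).erase f := by
    ext x; simp only [mem_inter, mem_erase]; tauto
  rw [e1, e2] at hsub
  have hf' : f ∈ X.erase e := mem_erase.mpr ⟨fun h => hef h.symm, hf⟩
  rcases M.rk_erase_or hf' ((erase_subset e X).trans hX) with h | h
  · omega
  · exact h

lemma rk_sdiff_isthmuses {X : Finset α} (S : Finset α) (hSX : S ⊆ X) (hX : X ⊆ M.E)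
    (hiso : ∀ f ∈ S, M.rk (X.erase f) + 1 = M.rk X) :
    M.rk (X \ S) + S.card = M.rk X := by
  induction S using Finset.induction generalizing X with
  | empty => simp
  | @insert f S' hf ih =>
    have hfX : f ∈ X := hSX (mem_insert_self f S')
    have hXf : X.erase f ⊆ M.E := (erase_subset f X).trans hX
    have hfi := hiso f (mem_insert_self f S')
    have hS'sub : S' ⊆ X.erase f := by
      intro g hg
      refine mem_erase.mpr ⟨fun h => hf (h ▸ hg), hSX (mem_insert_of_mem hg)⟩
    have hiso' : ∀ g ∈ S', M.rk ((X.erase f).erase g) + 1 = M.rk (X.erase f) := by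
      intro g hg
      exact M.isthmus_transfer (hS'sub hg) (erase_subset f X) hX
        (hiso g (mem_insert_of_mem hg))
    have ihv := ih hS'sub hXf hiso'
    have e1 : X \ insert f S' = (X.erase f) \ S' := by
      ext x; simp only [mem_sdiff, mem_erase, mem_insert]; tauto
    rw [e1, card_insert_of_notMem hf]
    omega

lemma sdiff_isthmuses_eq_cyc {X : Finset α} : X \ (X \ M.cyc X) = M.cyc X := by
  ext x
  simp only [mem_sdiff]
  have := M.cyc_subset X
  constructor
  · rintro ⟨hx, hn⟩
    by_contra hc
    exact hn ⟨hx, hc⟩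
  · intro hx
    exact ⟨this hx, fun h => h.2 hx⟩

lemma rk_cyc_add {H : Finset α} (hH : H ⊆ M.E) :
    M.rk (M.cyc H) + (H \ M.cyc H).card = M.rk H := by
  have h := M.rk_sdiff_isthmuses (H \ M.cyc H) sdiff_subset hH ?_
  · rwa [M.sdiff_isthmuses_eq_cyc] at h
  · intro f hfI
    obtain ⟨hfH, hfn⟩ := mem_sdiff.mp hfI
    rcases M.rk_erase_or hfH hH with h | h
    · exact absurd ((M.mem_cyc_iff).mpr ⟨hfH, h⟩) hfn
    · exact h

lemma cl_cyc_of_flat {H : Finset α} (hH : H ⊆ M.E) (hflat : M.cl H = H) :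
    M.cl (M.cyc H) = M.cyc H := by
  have hZH : M.cyc H ⊆ H := M.cyc_subset H
  have hZE : M.cyc H ⊆ M.E := hZH.trans hH
  apply Subset.antisymm
  · intro e he
    obtain ⟨heE, hrk⟩ := (M.mem_cl_iff).mp he
    -- first, e ∈ H
    have heH : e ∈ H := by
      have e1 : insert e H = insert e (M.cyc H) ∪ (H \ M.cyc H) := by
        ext x; simp only [mem_union, mem_insert, mem_sdiff]
        constructor
        · rintro (rfl | hx)
          · exact Or.inl (Or.inl rfl)
          · by_cases hxz : x ∈ M.cyc H
            · exact Or.inl (Or.inr hxz)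
            · exact Or.inr ⟨hx, hxz⟩
        · rintro ((rfl | hx) | ⟨hx, _⟩)
          · exact Or.inl rfl
          · exact Or.inr (hZH hx)
          · exact Or.inr hx
      have h2 : M.rk (insert e H) ≤ M.rk (insert e (M.cyc H)) +
          ((H \ M.cyc H) \ insert e (M.cyc H)).card := by
        rw [e1]
        exact M.rk_union_le' _ (by rw [← e1]; exact insert_subset heE hH)
      have h3 : ((H \ M.cyc H) \ insert e (M.cyc H)).card ≤ (H \ M.cyc H).card :=
        card_le_card (sdiff_subset)
      have h4 := M.rk_cyc_add hH
      have h5 : M.rk H ≤ M.rk (insert e H) := M.rk_insert_ge (insert_subset heE hH)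
      have : M.rk (insert e H) = M.rk H := by omega
      have : e ∈ M.cl H := (M.mem_cl_iff).mpr ⟨heE, this⟩
      rwa [hflat] at this
    -- now, e ∈ cyc H
    by_contra hc
    have hiso : M.rk (H.erase e) + 1 = M.rk H := by
      rcases M.rk_erase_or heH hH with h | h
      · exact absurd ((M.mem_cyc_iff).mpr ⟨heH, h⟩) hc
      · exact h
    have htr := M.isthmus_transfer (mem_insert_self e (M.cyc H))
      (insert_subset heH hZH) hH hiso
    rw [erase_insert (fun h => hc h)] at htr
    omega
  · exact M.subset_cl hZE

lemma cyc_cyc {H : Finset α} (hH : H ⊆ M.E) : M.cyc (M.cyc H) = M.cyc H := by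
  have hZH : M.cyc H ⊆ H := M.cyc_subset H
  apply Subset.antisymm (M.cyc_subset _)
  intro e he
  obtain ⟨heH, hrk⟩ := (M.mem_cyc_iff).mp he
  refine (M.mem_cyc_iff).mpr ⟨he, ?_⟩
  have hIiso : ∀ f ∈ H \ M.cyc H, M.rk ((H.erase e).erase f) + 1 = M.rk (H.erase e) := by
    intro f hfI
    obtain ⟨hfH, hfn⟩ := mem_sdiff.mp hfI
    have hef : e ≠ f := fun h => hfn (h ▸ he)
    have hif : M.rk (H.erase f) + 1 = M.rk H := by
      rcases M.rk_erase_or hfH hH with h | h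
      · exact absurd ((M.mem_cyc_iff).mpr ⟨hfH, h⟩) hfn
      · exact h
    exact M.two_erase hef heH hfH hH hrk hif
  have hIsub : H \ M.cyc H ⊆ H.erase e := by
    intro f hfI
    obtain ⟨hfH, hfn⟩ := mem_sdiff.mp hfI
    exact mem_erase.mpr ⟨fun h => hfn (h ▸ he), hfH⟩
  have h10 := M.rk_sdiff_isthmuses (H \ M.cyc H) hIsub ((erase_subset e H).trans hH) hIiso
  have e1 : (H.erase e) \ (H \ M.cyc H) = (M.cyc H).erase e := by
    ext x
    simp only [mem_sdiff, mem_erase]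
    constructor
    · rintro ⟨⟨hxe, hxH⟩, hn⟩
      refine ⟨hxe, ?_⟩
      by_contra hc
      exact hn ⟨hxH, hc⟩
    · rintro ⟨hxe, hx⟩
      exact ⟨⟨hxe, hZH hx⟩, fun h => h.2 hx⟩
  rw [e1] at h10
  have h4 := M.rk_cyc_add hH
  omega

end FinMatroid


open Classical in
/-- `Υ(F) = { X ∈ Z(M) : ρ(1_Z) − 1 = ρ(X) + |F − X| }`, where `1_Z = cyc(E)`. -/
noncomputable def upsilon {α : Type*} [DecidableEq α] (M : FinMatroid α) (F : Finset α) :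
    Finset (Finset α) :=
  M.E.powerset.filter fun Z =>
    M.IsCyclicFlat Z ∧ M.rk (M.cyc M.E) = M.rk Z + (F \ Z).card + 1

open Classical in
/-- `Ῡ(F)`: the inclusion-maximal elements of `Υ(F)`. -/
noncomputable def upsilonBar {α : Type*} [DecidableEq α] (M : FinMatroid α) (F : Finset α) :
    Finset (Finset α) :=
  (upsilon M F).filter fun Z => ∀ Z' ∈ upsilon M F, Z ⊆ Z' → Z = Z'

open Classical in
/-- For a flat `F ⊆ 1_Z = cyc(E)` with `ρ(F) = ρ(1_Z) − 2`, the number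
of flats `H` with `F ⊊ H ⊊ 1_Z` equals `|1_Z − F| − Σ_{Z ∈ Ῡ(F)} (|Z − F| − 1)`. -/
theorem card_flats_between {α : Type*} [DecidableEq α] (M : FinMatroid α)
    (F : Finset α) (hF : M.IsFlat F) (hF1 : F ⊆ M.cyc M.E)
    (hr : M.rk F + 2 = M.rk (M.cyc M.E)) :
    (M.E.powerset.filter fun H => M.IsFlat H ∧ F ⊂ H ∧ H ⊂ M.cyc M.E).card =
      (M.cyc M.E \ F).card - ∑ Z ∈ upsilonBar M F, ((Z \ F).card - 1) := by
  classical
  have hFE : F ⊆ M.E := hF.1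
  have hclF : M.cl F = F := hF.2
  set L := M.cyc M.E with hLdef
  have hLE : L ⊆ M.E := M.cyc_subset M.E
  have hclE : M.cl M.E = M.E :=
    Subset.antisymm (M.cl_subset_ground _) (M.subset_cl Subset.rfl)
  have hclL : M.cl L = L := M.cl_cyc_of_flat Subset.rfl hclE
  have hrL : M.rk L = M.rk F + 2 := hr.symm
  have hrkinsert : ∀ e ∈ M.E, e ∉ F → M.rk (insert e F) = M.rk F + 1 := by
    intro e heE heF
    have hsub : insert e F ⊆ M.E := insert_subset heE hFE
    have h1 := M.rk_insert_le' hsub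
    have h2 := M.rk_insert_ge hsub
    have h3 : M.rk (insert e F) ≠ M.rk F := by
      intro h
      have : e ∈ M.cl F := (M.mem_cl_iff).mpr ⟨heE, h⟩
      rw [hclF] at this
      exact heF this
    omega
  set Fs := M.E.powerset.filter (fun H => M.IsFlat H ∧ F ⊂ H ∧ H ⊂ L) with hFsdef
  have hmemFs : ∀ H, H ∈ Fs ↔ (H ⊆ M.E ∧ M.IsFlat H ∧ F ⊂ H ∧ H ⊂ L) := by
    intro H
    rw [hFsdef]
    simp only [mem_filter, mem_powerset]
  have hFsrk : ∀ H ∈ Fs, M.rk H = M.rk F + 1 := by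
    intro H hH
    obtain ⟨hHE, hHflat, hFH, hHL⟩ := (hmemFs H).mp hH
    obtain ⟨e, heH, heF⟩ := exists_of_ssubset hFH
    have h1 : M.rk (insert e F) ≤ M.rk H :=
      M.rk_mono _ _ (insert_subset heH hFH.subset) hHE
    have h2 := hrkinsert e (hHE heH) heF
    have h3 : M.rk H ≤ M.rk L := M.rk_mono _ _ hHL.subset hLE
    have h4 : M.rk H ≠ M.rk L := by
      intro h
      have := M.flat_ext hHflat.2 hHL.subset hLE (le_of_eq h.symm)
      exact hHL.ne this.symm
    omega
  have hUniq : ∀ H ∈ Fs, ∀ e, e ∈ H → e ∉ F → H = M.cl (insert e F) := by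
    intro H hH e heH heF
    obtain ⟨hHE, hHflat, hFH, hHL⟩ := (hmemFs H).mp hH
    have hiE : insert e F ⊆ M.E := insert_subset (hHE heH) hFE
    have hsub : insert e F ⊆ H := insert_subset heH hFH.subset
    have h1 : M.cl (insert e F) ⊆ H := by
      have := M.cl_mono hsub hHE
      rwa [hHflat.2] at this
    have hrkcl : M.rk (M.cl (insert e F)) = M.rk F + 1 := by
      rw [M.rk_cl hiE]
      exact hrkinsert e (hHE heH) heF
    exact M.flat_ext (M.cl_cl hiE) h1 hHE (by rw [hrkcl, hFsrk H hH])
  have hHe : ∀ e ∈ L, e ∉ F → (M.cl (insert e F) ∈ Fs ∧ e ∈ M.cl (insert e F)) := by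
    intro e heL heF
    have heE : e ∈ M.E := hLE heL
    have hiE : insert e F ⊆ M.E := insert_subset heE hFE
    have hclsub : M.cl (insert e F) ⊆ L := by
      have := M.cl_mono (insert_subset heL hF1) hLE
      rwa [hclL] at this
    have hrkcl : M.rk (M.cl (insert e F)) = M.rk F + 1 := by
      rw [M.rk_cl hiE]
      exact hrkinsert e heE heF
    have hFsubcl : F ⊆ M.cl (insert e F) := (subset_insert e F).trans (M.subset_cl hiE)
    have hecl : e ∈ M.cl (insert e F) := (M.subset_cl hiE) (mem_insert_self e F)
    have hne : M.cl (insert e F) ≠ L := by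
      intro h
      rw [h, hrL] at hrkcl
      omega
    refine ⟨(hmemFs _).mpr ⟨M.cl_subset_ground _,
      ⟨M.cl_subset_ground _, M.cl_cl hiE⟩, ?_, ?_⟩, hecl⟩
    · exact (Finset.ssubset_iff_of_subset hFsubcl).mpr ⟨e, hecl, heF⟩
    · exact lt_of_le_of_ne hclsub hne
  have hHsubL : ∀ H ∈ Fs, H \ F ⊆ L \ F := fun H hH =>
    sdiff_subset_sdiff ((hmemFs H).mp hH).2.2.2.subset Subset.rfl
  have hcover : Fs.biUnion (fun H => H \ F) = L \ F := by
    apply Subset.antisymm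
    · intro x hx
      obtain ⟨H, hH, hxH⟩ := mem_biUnion.mp hx
      exact hHsubL H hH hxH
    · intro e he
      obtain ⟨heL, heF⟩ := mem_sdiff.mp he
      obtain ⟨hmem, hecl⟩ := hHe e heL heF
      exact mem_biUnion.mpr ⟨_, hmem, mem_sdiff.mpr ⟨hecl, heF⟩⟩
  have hdisj : ∀ H₁ ∈ Fs, ∀ H₂ ∈ Fs, H₁ ≠ H₂ → Disjoint (H₁ \ F) (H₂ \ F) := by
    intro H₁ h1 H₂ h2 hne
    rw [Finset.disjoint_left]
    intro e he1 he2
    obtain ⟨heH1, heF⟩ := mem_sdiff.mp he1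
    obtain ⟨heH2, _⟩ := mem_sdiff.mp he2
    exact hne ((hUniq H₁ h1 e heH1 heF).trans (hUniq H₂ h2 e heH2 heF).symm)
  have hcard : ∑ H ∈ Fs, (H \ F).card = (L \ F).card := by
    rw [← hcover]
    exact (card_biUnion hdisj).symm
  have hHne : ∀ H ∈ Fs, 1 ≤ (H \ F).card := by
    intro H hH
    obtain ⟨e, heH, heF⟩ := exists_of_ssubset ((hmemFs H).mp hH).2.2.1
    exact card_pos.mpr ⟨e, mem_sdiff.mpr ⟨heH, heF⟩⟩
  have hsum1 : ∑ H ∈ Fs, (H \ F).card = Fs.card + ∑ H ∈ Fs, ((H \ F).card - 1) := by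
    have : ∑ H ∈ Fs, (H \ F).card = ∑ H ∈ Fs, (1 + ((H \ F).card - 1)) :=
      Finset.sum_congr rfl (fun H hH => by have := hHne H hH; omega)
    rw [this, Finset.sum_add_distrib, Finset.sum_const, smul_eq_mul, mul_one]
  have hmemU : ∀ Z, Z ∈ upsilon M F ↔
      (Z ⊆ M.E ∧ M.IsCyclicFlat Z ∧ M.rk Z + (F \ Z).card = M.rk F + 1) := by
    intro Z
    rw [upsilon]
    simp only [mem_filter, mem_powerset]
    constructor
    · rintro ⟨h1, h2, h3⟩
      rw [← hLdef, hrL] at h3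
      exact ⟨h1, h2, by omega⟩
    · rintro ⟨h1, h2, h3⟩
      refine ⟨h1, h2, ?_⟩
      rw [← hLdef, hrL]
      omega
  have hZL : ∀ Z, M.IsCyclicFlat Z → Z ⊆ L := by
    intro Z hZ
    have := M.cyc_mono hZ.1 (Subset.rfl : M.E ⊆ M.E)
    rw [hZ.2.2] at this
    rw [hLdef]
    exact this
  have hC : ∀ Z ∈ upsilon M F, (Z \ F).Nonempty →
      M.cl (Z ∪ F) ∈ Fs ∧ Z ⊆ M.cyc (M.cl (Z ∪ F)) := by
    intro Z hZ hne
    obtain ⟨hZE, hZcf, hZrk⟩ := (hmemU Z).mp hZ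
    have hZFE : Z ∪ F ⊆ M.E := union_subset hZE hFE
    obtain ⟨e, he⟩ := hne
    obtain ⟨heZ, heF⟩ := mem_sdiff.mp he
    have hZsubL := hZL Z hZcf
    have hrkZF : M.rk (Z ∪ F) ≤ M.rk F + 1 := by
      have := M.rk_union_le' F hZFE
      omega
    have hge : M.rk F + 1 ≤ M.rk (Z ∪ F) := by
      have h1 : insert e F ⊆ Z ∪ F :=
        insert_subset (mem_union_left _ heZ) subset_union_right
      have := M.rk_mono _ _ h1 hZFE
      rw [hrkinsert e (hZE heZ) heF] at this
      exact this
    have hrkG : M.rk (M.cl (Z ∪ F)) = M.rk F + 1 := by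
      rw [M.rk_cl hZFE]
      omega
    have hGL : M.cl (Z ∪ F) ⊆ L := by
      have := M.cl_mono (union_subset hZsubL hF1) hLE
      rwa [hclL] at this
    have hGne : M.cl (Z ∪ F) ≠ L := by
      intro h
      rw [h, hrL] at hrkG
      omega
    have hFsubG : F ⊆ M.cl (Z ∪ F) := subset_union_right.trans (M.subset_cl hZFE)
    have hZsubG : Z ⊆ M.cl (Z ∪ F) := subset_union_left.trans (M.subset_cl hZFE)
    have hmem : M.cl (Z ∪ F) ∈ Fs := (hmemFs _).mpr ⟨M.cl_subset_ground _,
      ⟨M.cl_subset_ground _, M.cl_cl hZFE⟩,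
      (Finset.ssubset_iff_of_subset hFsubG).mpr ⟨e, hZsubG heZ, heF⟩,
      lt_of_le_of_ne hGL hGne⟩
    refine ⟨hmem, ?_⟩
    have := M.cyc_mono hZsubG (M.cl_subset_ground _)
    rwa [hZcf.2.2] at this
  have hB : ∀ H ∈ Fs, 2 ≤ (H \ F).card →
      (M.cyc H ∈ upsilon M F ∧ M.cyc H \ F = H \ F ∧ M.cl (M.cyc H ∪ F) = H) := by
    intro H hH h2
    obtain ⟨hHE, hHflat, hFH, hHL⟩ := (hmemFs H).mp hH
    have hrkH := hFsrk H hH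
    have hHFcyc : H \ F ⊆ M.cyc H := by
      intro e he
      obtain ⟨heH, heF⟩ := mem_sdiff.mp he
      obtain ⟨f, hf, hfe⟩ := Finset.exists_mem_ne (s := H \ F) (by omega) e
      obtain ⟨hfH, hfF⟩ := mem_sdiff.mp hf
      have hsub : insert f F ⊆ H.erase e := by
        intro x hx
        rcases mem_insert.mp hx with rfl | hx
        · exact mem_erase.mpr ⟨hfe, hfH⟩
        · exact mem_erase.mpr ⟨fun h => heF (h ▸ hx), hFH.subset hx⟩
      have h1 : M.rk (insert f F) ≤ M.rk (H.erase e) :=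
        M.rk_mono _ _ hsub ((erase_subset e H).trans hHE)
      rw [hrkinsert f (hHE hfH) hfF] at h1
      have h3 : M.rk (H.erase e) ≤ M.rk H := M.rk_mono _ _ (erase_subset e H) hHE
      exact (M.mem_cyc_iff).mpr ⟨heH, by omega⟩
    have hZF : M.cyc H \ F = H \ F :=
      Subset.antisymm (sdiff_subset_sdiff (M.cyc_subset H) Subset.rfl)
        (fun x hx => mem_sdiff.mpr ⟨hHFcyc hx, (mem_sdiff.mp hx).2⟩)
    have hFZ : F \ M.cyc H = H \ M.cyc H := by
      apply Subset.antisymm (sdiff_subset_sdiff hFH.subset Subset.rfl)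
      intro x hx
      obtain ⟨hxH, hxn⟩ := mem_sdiff.mp hx
      refine mem_sdiff.mpr ⟨?_, hxn⟩
      by_contra hxF
      exact hxn (hHFcyc (mem_sdiff.mpr ⟨hxH, hxF⟩))
    have hrkZ := M.rk_cyc_add hHE
    have hmemU' : M.cyc H ∈ upsilon M F := (hmemU _).mpr ⟨(M.cyc_subset H).trans hHE,
      ⟨(M.cyc_subset H).trans hHE, M.cl_cyc_of_flat hHE hHflat.2, M.cyc_cyc hHE⟩,
      by rw [hFZ]; omega⟩
    refine ⟨hmemU', hZF, ?_⟩
    apply Subset.antisymm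
    · have hsub : M.cyc H ∪ F ⊆ H := union_subset (M.cyc_subset H) hFH.subset
      have := M.cl_mono hsub hHE
      rwa [hHflat.2] at this
    · intro x hx
      have hxmem : x ∈ M.cyc H ∪ F := by
        by_cases hxF : x ∈ F
        · exact mem_union_right _ hxF
        · exact mem_union_left _ (hHFcyc (mem_sdiff.mpr ⟨hx, hxF⟩))
      exact M.subset_cl (union_subset ((M.cyc_subset H).trans hHE) hFE) hxmem
  have hD : ∀ H ∈ Fs, 2 ≤ (H \ F).card → M.cyc H ∈ upsilonBar M F := by
    intro H hH h2
    obtain ⟨hU, hZF, hclZ⟩ := hB H hH h2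
    rw [upsilonBar, mem_filter]
    refine ⟨hU, ?_⟩
    intro Z' hZ' hsub
    have hne : (H \ F).Nonempty := card_pos.mp (by omega)
    obtain ⟨e, he⟩ := hne
    have he' : e ∈ M.cyc H \ F := by rw [hZF]; exact he
    obtain ⟨heZ, heF⟩ := mem_sdiff.mp he'
    have heZ' : e ∈ Z' := hsub heZ
    obtain ⟨hG'mem, hZ'cyc⟩ := hC Z' hZ' ⟨e, mem_sdiff.mpr ⟨heZ', heF⟩⟩
    have hZ'E : Z' ⊆ M.E := ((hmemU Z').mp hZ').1
    have heG' : e ∈ M.cl (Z' ∪ F) :=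
      (M.subset_cl (union_subset hZ'E hFE)) (mem_union_left _ heZ')
    have hG'H : M.cl (Z' ∪ F) = H := by
      rw [hUniq _ hG'mem e heG' heF, ← hUniq H hH e (mem_sdiff.mp he).1 heF]
    rw [hG'H] at hZ'cyc
    exact Subset.antisymm hsub hZ'cyc
  have hE : ∀ Z ∈ upsilonBar M F, 2 ≤ (Z \ F).card →
      (M.cl (Z ∪ F) ∈ Fs ∧ 2 ≤ (M.cl (Z ∪ F) \ F).card ∧ M.cyc (M.cl (Z ∪ F)) = Z) := by
    intro Z hZbar h2
    rw [upsilonBar, mem_filter] at hZbar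
    obtain ⟨hZU, hmax⟩ := hZbar
    have hne : (Z \ F).Nonempty := card_pos.mp (by omega)
    obtain ⟨hGmem, hZcyc⟩ := hC Z hZU hne
    have hZG : Z ⊆ M.cl (Z ∪ F) :=
      subset_union_left.trans (M.subset_cl (union_subset ((hmemU Z).mp hZU).1 hFE))
    have hcard2 : 2 ≤ (M.cl (Z ∪ F) \ F).card :=
      le_trans h2 (card_le_card (sdiff_subset_sdiff hZG Subset.rfl))
    obtain ⟨hcycU, _, _⟩ := hB _ hGmem hcard2
    exact ⟨hGmem, hcard2, (hmax _ hcycU hZcyc).symm⟩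
  have hsumU : ∑ Z ∈ upsilonBar M F, ((Z \ F).card - 1) =
      ∑ Z ∈ (upsilonBar M F).filter (fun Z => 2 ≤ (Z \ F).card), ((Z \ F).card - 1) := by
    refine (Finset.sum_filter_of_ne ?_).symm
    intro Z _ hZne
    omega
  have hsumF : ∑ H ∈ Fs, ((H \ F).card - 1) =
      ∑ H ∈ Fs.filter (fun H => 2 ≤ (H \ F).card), ((H \ F).card - 1) := by
    refine (Finset.sum_filter_of_ne ?_).symm
    intro H _ hHne'
    omega
  have hbij : ∑ H ∈ Fs.filter (fun H => 2 ≤ (H \ F).card), ((H \ F).card - 1) =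
      ∑ Z ∈ (upsilonBar M F).filter (fun Z => 2 ≤ (Z \ F).card), ((Z \ F).card - 1) := by
    refine Finset.sum_nbij' (i := fun H => M.cyc H) (j := fun Z => M.cl (Z ∪ F))
      ?_ ?_ ?_ ?_ ?_
    · intro H hH
      obtain ⟨hHFs, h2⟩ := mem_filter.mp hH
      refine mem_filter.mpr ⟨hD H hHFs h2, ?_⟩
      rw [(hB H hHFs h2).2.1]
      exact h2
    · intro Z hZ
      obtain ⟨hZbar, h2⟩ := mem_filter.mp hZ
      obtain ⟨hGmem, hcard2, _⟩ := hE Z hZbar h2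
      exact mem_filter.mpr ⟨hGmem, hcard2⟩
    · intro H hH
      obtain ⟨hHFs, h2⟩ := mem_filter.mp hH
      exact (hB H hHFs h2).2.2
    · intro Z hZ
      obtain ⟨hZbar, h2⟩ := mem_filter.mp hZ
      exact (hE Z hZbar h2).2.2
    · intro H hH
      obtain ⟨hHFs, h2⟩ := mem_filter.mp hH
      rw [(hB H hHFs h2).2.1]
  omega
end

section
/- Let M = (E, ρ) be a simple binary matroid that contains no isthmuses, let e ∈ E, and let C be a circuit of M of minimal cardinality among all circuits containing e. Then cl(C) = C, i.e., C is a flat of M. -/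
open Finset

section Lemmas

namespace FinMatroid

variable {α : Type*} [DecidableEq α] (M : FinMatroid α)

lemma rk_empty : M.rk ∅ = 0 :=
  Nat.le_zero.mp ((M.rk_le_card ∅ (empty_subset _)).trans (by simp))

lemma rk_erase_le {A : Finset α} (hA : A ⊆ M.E) (y : α) :
    M.rk (A.erase y) ≤ M.rk A :=
  M.rk_mono _ _ (erase_subset _ _) hA

lemma rk_le_erase_add_one {A : Finset α} (hA : A ⊆ M.E) {y : α} (hy : y ∈ A) :
    M.rk A ≤ M.rk (A.erase y) + 1 := by
  have h := M.rk_submod (A.erase y) {y} ((erase_subset _ _).trans hA)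
    (by simpa using hA hy)
  have h1 : A.erase y ∪ {y} = A := by
    ext z
    simp only [mem_union, mem_erase, mem_singleton]
    constructor
    · rintro (⟨_, hz⟩ | rfl) <;> [exact hz; exact hy]
    · intro hz
      by_cases hzy : z = y
      · exact Or.inr hzy
      · exact Or.inl ⟨hzy, hz⟩
  have h2 : A.erase y ∩ {y} = ∅ := by
    ext z; simp only [mem_inter, mem_erase, mem_singleton, notMem_empty]; tauto
  have h3 : M.rk {y} ≤ 1 := by
    have := M.rk_le_card {y} (by simpa using hA hy); simpa using this
  rw [h1, h2] at h
  omega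

lemma rk_le_add_sdiff {A B : Finset α} (hBA : B ⊆ A) (hA : A ⊆ M.E) :
    M.rk A ≤ M.rk B + (A \ B).card := by
  classical
  generalize hn : (A \ B).card = n
  induction n generalizing A with
  | zero =>
    have : A = B := by
      have : A \ B = ∅ := card_eq_zero.mp hn
      have hsub : A ⊆ B := by
        intro x hx
        by_contra hxB
        exact (notMem_empty x) (this ▸ mem_sdiff.mpr ⟨hx, hxB⟩)
      exact Subset.antisymm hsub hBA
    simp [this]
  | succ n ih =>
    have hne : (A \ B).Nonempty := by
      rw [← card_pos, hn]; omega
    obtain ⟨y, hy⟩ := hne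
    have hyA : y ∈ A := (mem_sdiff.mp hy).1
    have hyB : y ∉ B := (mem_sdiff.mp hy).2
    have hBA' : B ⊆ A.erase y := fun x hx => mem_erase.mpr ⟨fun h => hyB (h ▸ hx), hBA hx⟩
    have hA' : A.erase y ⊆ M.E := (erase_subset _ _).trans hA
    have hcard : (A.erase y \ B).card = n := by
      have : A.erase y \ B = (A \ B).erase y := by
        ext z; simp only [mem_sdiff, mem_erase]; tauto
      rw [this, card_erase_of_mem hy, hn]
      omega
    have := ih hBA' hA' hcard
    have := M.rk_le_erase_add_one hA hyA
    omega

lemma indep_subset {A B : Finset α} (hA : A ⊆ M.E) (hind : M.rk A = A.card)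
    (hBA : B ⊆ A) : M.rk B = B.card := by
  have h1 := M.rk_le_card B (hBA.trans hA)
  have h2 := M.rk_le_add_sdiff hBA hA
  have h3 : (A \ B).card = A.card - B.card := by
    rw [card_sdiff_of_subset hBA]
  have h4 : B.card ≤ A.card := card_le_card hBA
  omega

lemma exists_removable {A : Finset α} (hA : A ⊆ M.E) (hdep : M.rk A < A.card) :
    ∃ y ∈ A, M.rk (A.erase y) = M.rk A := by
  classical
  by_contra hcon
  push_neg at hcon
  -- claim: if all erases drop rank, A is independent
  suffices h : M.rk A = A.card by omega
  clear hdep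
  have key : ∀ n (A : Finset α), A ⊆ M.E → A.card = n →
      (∀ y ∈ A, M.rk (A.erase y) < M.rk A) → M.rk A = A.card := by
    intro n
    induction n with
    | zero =>
      intro A hA hcard _
      rw [card_eq_zero.mp hcard]; simp [M.rk_empty]
    | succ n ih =>
      intro A hA hcard hdrop
      have hne : A.Nonempty := by rw [← card_pos, hcard]; omega
      obtain ⟨y, hy⟩ := hne
      have hy1 : M.rk (A.erase y) < M.rk A := hdrop y hy
      have hy2 : M.rk A ≤ M.rk (A.erase y) + 1 := M.rk_le_erase_add_one hA hy
      have hyrk : M.rk (A.erase y) = M.rk A - 1 := by omega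
      have hdrop' : ∀ z ∈ A.erase y, M.rk ((A.erase y).erase z) < M.rk (A.erase y) := by
        intro z hz
        have hzy : z ≠ y := (mem_erase.mp hz).1
        have hzA : z ∈ A := (mem_erase.mp hz).2
        have hz1 : M.rk (A.erase z) < M.rk A := hdrop z hzA
        have hz2 : M.rk A ≤ M.rk (A.erase z) + 1 := M.rk_le_erase_add_one hA hzA
        have hu : A.erase y ∪ A.erase z = A := by
          ext w
          simp only [mem_union, mem_erase]
          constructor
          · rintro (⟨_, hw⟩ | ⟨_, hw⟩) <;> exact hw
          · intro hw
            by_cases hwy : w = y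
            · exact Or.inr ⟨by rw [hwy]; exact Ne.symm hzy, hw⟩
            · exact Or.inl ⟨hwy, hw⟩
        have hi : A.erase y ∩ A.erase z = (A.erase y).erase z := by
          ext w; simp only [mem_inter, mem_erase]; tauto
        have hsub := M.rk_submod (A.erase y) (A.erase z)
          ((erase_subset _ _).trans hA) ((erase_subset _ _).trans hA)
        rw [hu, hi] at hsub
        omega
      have hih := ih (A.erase y) ((erase_subset _ _).trans hA)
        (by rw [card_erase_of_mem hy, hcard]; rfl) hdrop'
      have hcarde : (A.erase y).card = n := by rw [card_erase_of_mem hy, hcard]; rfl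
      have hler := M.rk_le_card A hA
      omega
  exact key A.card A hA rfl (fun y hy => lt_of_le_of_ne (M.rk_erase_le hA y) (hcon y hy))

lemma exists_circuit_of_cl {A : Finset α} (hA : A ⊆ M.E) {x : α} (hx : x ∈ M.E)
    (hxA : x ∉ A) (h : M.rk (insert x A) = M.rk A) :
    ∃ T, M.IsCircuit T ∧ T ⊆ insert x A ∧ x ∈ T := by
  classical
  set P := A.powerset.filter (fun B => M.rk (insert x B) = M.rk B) with hP
  have hAP : A ∈ P := by simp [hP, h]
  obtain ⟨B, hBP, hBmin⟩ := P.exists_min_image card ⟨A, hAP⟩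
  have hBA : B ⊆ A := mem_powerset.mp (mem_filter.mp hBP).1
  have hBrk : M.rk (insert x B) = M.rk B := (mem_filter.mp hBP).2
  have hBE : B ⊆ M.E := hBA.trans hA
  have hxB : x ∉ B := fun hc => hxA (hBA hc)
  have hxBE : insert x B ⊆ M.E := insert_subset hx hBE
  -- B is independent
  have hBind : M.rk B = B.card := by
    by_contra hcon
    have : M.rk B < B.card := lt_of_le_of_ne (M.rk_le_card B hBE) hcon
    obtain ⟨y, hyB, hyrk⟩ := M.exists_removable hBE this
    have h1 : M.rk (B.erase y) ≤ M.rk (insert x (B.erase y)) :=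
      M.rk_mono _ _ (subset_insert _ _) (insert_subset hx ((erase_subset _ _).trans hBE))
    have h2 : M.rk (insert x (B.erase y)) ≤ M.rk (insert x B) :=
      M.rk_mono _ _ (insert_subset_insert _ (erase_subset _ _)) hxBE
    have hmem : B.erase y ∈ P := by
      simp only [hP, mem_filter, mem_powerset]
      exact ⟨(erase_subset _ _).trans hBA, by omega⟩
    have := hBmin _ hmem
    have := card_erase_of_mem hyB
    have : 0 < B.card := card_pos.mpr ⟨y, hyB⟩
    omega
  refine ⟨insert x B, ⟨hxBE, ?_, ?_⟩, insert_subset_insert _ hBA, mem_insert_self _ _⟩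
  · rw [card_insert_of_notMem hxB]
    omega
  · intro D hD
    by_cases hxD : x ∈ D
    · set B' := D.erase x with hB'
      have hB'B : B' ⊆ B := by
        intro z hz
        have := hD.1 (mem_erase.mp hz).2
        rcases mem_insert.mp this with rfl | hzB
        · exact absurd rfl (mem_erase.mp hz).1
        · exact hzB
      have hDins : D = insert x B' := by
        rw [hB', insert_erase hxD]
      have hB'ne : B' ≠ B := by
        intro hc
        have : D = insert x B := by rw [hDins, hc]
        exact (ssubset_irrefl D) (this ▸ hD)
      have hB'ss : B' ⊂ B := Finset.ssubset_iff_subset_ne.mpr ⟨hB'B, hB'ne⟩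
      have hB'ind : M.rk B' = B'.card := M.indep_subset hBE hBind hB'B
      have hxB' : x ∉ B' := fun hc => hxB (hB'B hc)
      have hne : M.rk (insert x B') ≠ M.rk B' := by
        intro hc
        have hmem : B' ∈ P := by
          simp only [hP, mem_filter, mem_powerset]
          exact ⟨hB'B.trans hBA, hc⟩
        have := hBmin _ hmem
        have := card_lt_card hB'ss
        omega
      have h1 : M.rk B' ≤ M.rk (insert x B') :=
        M.rk_mono _ _ (subset_insert _ _) (insert_subset hx (hB'B.trans hBE))
      have h2 := M.rk_le_card (insert x B') (insert_subset hx (hB'B.trans hBE))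
      rw [card_insert_of_notMem hxB'] at h2
      rw [hDins, card_insert_of_notMem hxB']
      omega
    · have hDB : D ⊆ B := fun z hz => by
        rcases mem_insert.mp (hD.1 hz) with rfl | h
        · exact absurd hz hxD
        · exact h
      exact M.indep_subset hBE hBind hDB

lemma circuit_rk {C : Finset α} (hC : M.IsCircuit C) : M.rk C + 1 = C.card := by
  obtain ⟨hCE, hdep, hind⟩ := hC
  have hne : C.Nonempty := by rw [← card_pos]; omega
  obtain ⟨y, hy⟩ := hne
  have hss : C.erase y ⊂ C := erase_ssubset hy
  have h1 := hind _ hss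
  have h2 : M.rk (C.erase y) ≤ M.rk C := M.rk_erase_le hCE y
  have h3 := card_erase_of_mem hy
  omega

lemma circuit_card_ge_three {C : Finset α} (hs : M.Simple) (hC : M.IsCircuit C) :
    3 ≤ C.card := by
  obtain ⟨hCE, hdep, _⟩ := hC
  by_contra hcon
  push_neg at hcon
  interval_cases h : C.card
  · omega
  · obtain ⟨y, rfl⟩ := card_eq_one.mp h
    have := hs.1 y (hCE (mem_singleton_self y))
    simp at hdep
    omega
  · obtain ⟨y, z, hyz, rfl⟩ := card_eq_two.mp h
    have := hs.2 y (hCE (by simp)) z (hCE (by simp)) hyz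
    omega


section Binary

lemma module_two_smul (v : Fin m → ZMod 2) : v + v = 0 := by
  have h2 : (2 : ZMod 2) = 0 := rfl
  calc v + v = (2 : ZMod 2) • v := (two_smul _ v).symm
    _ = 0 := by rw [h2, zero_smul]

variable {m : ℕ} {φ : α → (Fin m → ZMod 2)}
  (hφ : ∀ A : Finset α, A ⊆ M.E →
      M.rk A = Module.finrank (ZMod 2) (Submodule.span (ZMod 2) (φ '' (A : Set α))))

include hφ

lemma phi_inj (hs : M.Simple) {e f : α} (he : e ∈ M.E) (hf : f ∈ M.E)
    (hef : e ≠ f) : φ e ≠ φ f := by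
  intro heq
  have h2 : M.rk {e, f} = 2 := hs.2 e he f hf hef
  have h1 : M.rk {e} = 1 := hs.1 e he
  have hss : φ '' (({e, f} : Finset α) : Set α) = φ '' (({e} : Finset α) : Set α) := by
    simp only [coe_insert, coe_singleton, Set.image_insert_eq, Set.image_singleton, heq]
    simp
  have := hφ {e, f} (insert_subset he (by simpa using hf))
  rw [hss, ← hφ {e} (by simpa using he)] at this
  omega

lemma zero_sum_rk {S : Finset α} (hS : S ⊆ M.E) {x : α} (hx : x ∈ S)
    (hsum : ∑ a ∈ S, φ a = 0) : M.rk S = M.rk (S.erase x) := by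
  have hxe : φ x = ∑ a ∈ S.erase x, φ a := by
    have h1 : φ x + ∑ a ∈ S.erase x, φ a = ∑ a ∈ S, φ a :=
      Finset.add_sum_erase S φ hx
    rw [hsum] at h1
    have h2 := module_two_smul (φ x)
    calc φ x = φ x + (φ x + ∑ a ∈ S.erase x, φ a) := by rw [h1, add_zero]
      _ = (φ x + φ x) + ∑ a ∈ S.erase x, φ a := by rw [add_assoc]
      _ = ∑ a ∈ S.erase x, φ a := by rw [h2, zero_add]
  have hmem : φ x ∈ Submodule.span (ZMod 2) (φ '' ((S.erase x : Finset α) : Set α)) := by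
    rw [hxe]
    exact Submodule.sum_mem _ fun a ha =>
      Submodule.subset_span (Set.mem_image_of_mem φ (Finset.mem_coe.mpr ha))
  have himg : φ '' ((S : Finset α) : Set α) =
      insert (φ x) (φ '' ((S.erase x : Finset α) : Set α)) := by
    conv_lhs => rw [← insert_erase hx]
    rw [coe_insert, Set.image_insert_eq]
  rw [hφ S hS, hφ (S.erase x) ((erase_subset _ _).trans hS), himg,
    Submodule.span_insert_eq_span hmem]

lemma circuit_sum_zero (hs : M.Simple) {C : Finset α} (hC : M.IsCircuit C) :
    ∑ a ∈ C, φ a = 0 := by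
  classical
  have hCE := hC.1
  have hrk := M.circuit_rk hC
  have hcpos : 0 < C.card := by omega
  set v : {a // a ∈ C} → (Fin m → ZMod 2) := fun i => φ i.1 with hv
  have hrange : Set.range v = φ '' (C : Set α) := by
    ext w
    constructor
    · rintro ⟨i, rfl⟩; exact ⟨i.1, i.2, rfl⟩
    · rintro ⟨a, ha, rfl⟩; exact ⟨⟨a, ha⟩, rfl⟩
  have hnli : ¬ LinearIndependent (ZMod 2) v := by
    intro hli
    have := finrank_span_eq_card hli
    rw [hrange, Fintype.card_coe, ← hφ C hCE] at this
    omega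
  obtain ⟨g, hg0, i0, hi0⟩ := Fintype.not_linearIndependent_iff.mp hnli
  have hzm : ∀ x : ZMod 2, x = 0 ∨ x = 1 := by decide
  set T : Finset α := ((Finset.univ.filter (fun i : {a // a ∈ C} => g i = 1)).image
    Subtype.val) with hT
  have hTC : T ⊆ C := by
    intro a ha
    obtain ⟨i, _, rfl⟩ := Finset.mem_image.mp ha
    exact i.2
  have hTsum : ∑ a ∈ T, φ a = 0 := by
    rw [hT, Finset.sum_image (fun x _ y _ h => Subtype.ext h)]
    have hsplit := Finset.sum_filter_add_sum_filter_not Finset.univ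
      (fun i : {a // a ∈ C} => g i = 1) (fun i => g i • v i)
    have h2 : ∑ i ∈ Finset.univ.filter (fun i : {a // a ∈ C} => ¬ g i = 1), g i • v i = 0 := by
      apply Finset.sum_eq_zero
      intro i hi
      have := (Finset.mem_filter.mp hi).2
      rcases hzm (g i) with h | h
      · rw [h, zero_smul]
      · exact absurd h this
    have h1 : ∑ i ∈ Finset.univ.filter (fun i : {a // a ∈ C} => g i = 1), g i • v i =
        ∑ i ∈ Finset.univ.filter (fun i : {a // a ∈ C} => g i = 1), φ i.1 := by
      apply Finset.sum_congr rfl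
      intro i hi
      rw [(Finset.mem_filter.mp hi).2, one_smul]
    rw [h2, add_zero, h1, hg0] at hsplit
    exact hsplit
  have hTne : T.Nonempty := by
    refine ⟨i0.1, Finset.mem_image.mpr ⟨i0, Finset.mem_filter.mpr ⟨Finset.mem_univ _, ?_⟩, rfl⟩⟩
    rcases hzm (g i0) with h | h
    · exact absurd h hi0
    · exact h
  have hTeq : T = C := by
    by_contra hne
    have hss : T ⊂ C := Finset.ssubset_iff_subset_ne.mpr ⟨hTC, hne⟩
    have hind := hC.2.2 T hss
    obtain ⟨x, hx⟩ := hTne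
    have := M.zero_sum_rk hφ (hTC.trans hCE) hx hTsum
    have h1 := M.rk_le_card (T.erase x) ((erase_subset _ _).trans (hTC.trans hCE))
    have h2 := card_erase_of_mem hx
    have h3 : 0 < T.card := card_pos.mpr ⟨x, hx⟩
    omega
  rw [← hTeq]
  exact hTsum

end Binary

end FinMatroid

end Lemmas

/-- In a simple binary matroid with no isthmuses, any circuit `C` of
minimal cardinality among circuits containing a given element `e` is a flat:
`cl(C) = C`. -/
theorem minimal_circuit_is_flat {α : Type*} [DecidableEq α] (M : FinMatroid α)
    (hs : M.Simple) (hni : M.NoIsthmus) (hb : M.IsBinary)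
    (e : α) (he : e ∈ M.E) (C : Finset α) (hC : M.IsCircuit C) (heC : e ∈ C)
    (hmin : ∀ C', M.IsCircuit C' → e ∈ C' → C.card ≤ C'.card) :
    M.cl C = C := by
  classical
  obtain ⟨m, φ, hφ⟩ := hb
  have hCE := hC.1
  have hrkC := M.circuit_rk hC
  apply Subset.antisymm
  · intro f hf
    rw [FinMatroid.cl, mem_filter] at hf
    obtain ⟨hfE, hfrk⟩ := hf
    by_contra hfC
    obtain ⟨D, hD, hDsub, hfD⟩ := M.exists_circuit_of_cl hCE hfE hfC hfrk
    have hDE := hD.1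
    have hD3 := M.circuit_card_ge_three hs hD
    have hrkD := M.circuit_rk hD
    have hsumC := M.circuit_sum_zero hφ hs hC
    have hsumD := M.circuit_sum_zero hφ hs hD
    have hDC : D \ C = {f} := by
      ext z
      simp only [mem_sdiff, mem_singleton]
      constructor
      · rintro ⟨hzD, hzC⟩
        rcases mem_insert.mp (hDsub hzD) with rfl | h
        · rfl
        · exact absurd h hzC
      · rintro rfl; exact ⟨hfD, hfC⟩
    set S : Finset α := insert f (C \ D) with hS
    have hfCD : f ∉ C \ D := fun h => hfC (mem_sdiff.mp h).1
    have hSE : S ⊆ M.E := insert_subset hfE (sdiff_subset.trans hCE)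
    -- sums over the pieces
    have e1 : ∑ a ∈ C \ D, φ a + ∑ a ∈ C ∩ D, φ a = ∑ a ∈ C, φ a := by
      have := Finset.sum_sdiff (f := φ) (inter_subset_left (s₁ := C) (s₂ := D))
      rwa [Finset.sdiff_inter_self_left] at this
    have e2 : ∑ a ∈ D \ C, φ a + ∑ a ∈ D ∩ C, φ a = ∑ a ∈ D, φ a := by
      have := Finset.sum_sdiff (f := φ) (inter_subset_left (s₁ := D) (s₂ := C))
      rwa [Finset.sdiff_inter_self_left] at this
    have e3 : D ∩ C = C ∩ D := inter_comm D C
    have e4 : ∑ a ∈ D \ C, φ a = φ f := by rw [hDC, sum_singleton]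
    rw [hsumC] at e1
    rw [hsumD, e3, e4] at e2
    have hsumS : ∑ a ∈ S, φ a = 0 := by
      rw [hS, sum_insert hfCD]
      have h2 := FinMatroid.module_two_smul (∑ a ∈ C ∩ D, φ a)
      calc φ f + ∑ a ∈ C \ D, φ a
          = (φ f + ∑ a ∈ C ∩ D, φ a) + (∑ a ∈ C \ D, φ a + ∑ a ∈ C ∩ D, φ a)
            - (∑ a ∈ C ∩ D, φ a + ∑ a ∈ C ∩ D, φ a) := by abel
        _ = 0 := by rw [e1, e2, h2]; simp
    -- cardinalities
    have hcard1 : (D ∩ C).card + 1 = D.card := by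
      have := card_inter_add_card_sdiff D C
      rw [hDC] at this
      simpa using this
    have hcard2 : (C ∩ D).card + (C \ D).card = C.card := card_inter_add_card_sdiff C D
    have hcard3 : (D ∩ C).card = (C ∩ D).card := by rw [e3]
    have hScard : S.card = (C \ D).card + 1 := by
      rw [hS, card_insert_of_notMem hfCD]
    by_cases heD : e ∈ D
    · have hminD := hmin D hD heD
      by_cases hDeq : D = insert f C
      · have hrkeq : M.rk D = M.rk C := by rw [hDeq, hfrk]
        have hcard : D.card = C.card + 1 := by rw [hDeq, card_insert_of_notMem hfC]
        omega
      · have hss : D ⊂ insert f C := Finset.ssubset_iff_subset_ne.mpr ⟨hDsub, hDeq⟩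
        have hlt : D.card < C.card + 1 := by
          have := card_lt_card hss
          rwa [card_insert_of_notMem hfC] at this
        have h1 : (C \ D).card = 1 := by omega
        obtain ⟨y, hy⟩ := card_eq_one.mp h1
        have hyCD : y ∈ C \ D := hy ▸ mem_singleton_self y
        have hyC : y ∈ C := (mem_sdiff.mp hyCD).1
        have hyE : y ∈ M.E := hCE hyC
        have hyf : y ≠ f := fun h => hfC (h ▸ hyC)
        have hfy : f ∉ ({y} : Finset α) := by simp [Ne.symm hyf]
        have hSfy : S = insert f {y} := by rw [hS, hy]
        have hrkS := M.zero_sum_rk hφ hSE (mem_insert_self f _) hsumS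
        have herase : S.erase f = {y} := by rw [hSfy, erase_insert hfy]
        have hr1 : M.rk S = 1 := by rw [hrkS, herase]; exact hs.1 y hyE
        have hr2 : M.rk S = 2 := by
          rw [hSfy]; exact hs.2 f hfE y hyE (Ne.symm hyf)
        omega
    · have heS : e ∈ S := mem_insert.mpr (Or.inr (mem_sdiff.mpr ⟨heC, heD⟩))
      have hrkS := M.zero_sum_rk hφ hSE heS hsumS
      have heSE : S.erase e ⊆ M.E := (erase_subset _ _).trans hSE
      have heA : e ∉ S.erase e := notMem_erase _ _
      have hins : insert e (S.erase e) = S := insert_erase heS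
      obtain ⟨T, hT, hTsub, heT⟩ := M.exists_circuit_of_cl heSE he heA
        (by rw [hins]; exact hrkS)
      have hTS : T ⊆ S := by rw [← hins]; exact hTsub
      have hminT := hmin T hT heT
      have hTcard := card_le_card hTS
      omega
  · intro c hc
    rw [FinMatroid.cl, mem_filter]
    exact ⟨hCE hc, by rw [insert_eq_self.mpr hc]⟩
end

section
/- Let M = (E, ρ) be a binary matroid with |E| = n, rank k = ρ(E) ≥ 1, and minimum distance d. Then n ≥ Σ_{i=0}^{k−1} ⌈d / 2^i⌉ (the Griesmer bound for binary matroids). -/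
open Finset

/-!
Griesmer's argument, read through the code of the representation. If `φ` represents `M` over
`GF(2)`, the words `(f (φ e))_{e ∈ E}` for linear functionals `f` form a binary linear code of
dimension `k = ρ(E)`, and the support `X` of a nonzero word satisfies `ρ(E − X) < ρ(E)`, so every
nonzero word has weight at least `d`. For such a code take a nonzero word `c` of minimum weight
`w ≥ d` and restrict the code to the zeros of `c`. Only `0` and `c` vanish there, so the dimension
drops by at most one; and for a word `x` with nonzero restriction, `wt x + wt (x + c) = w + 2 b`
with `b` the weight of the restriction, so `b ≥ w / 2 ≥ ⌈d / 2⌉`. Induction on `k`, using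
`⌈⌈d / 2⌉ / 2^i⌉ = ⌈d / 2^(i+1)⌉`, gives `n - w ≥ Σ_{i=1}^{k-1} ⌈d / 2^i⌉`.
-/

open Module Submodule

theorem hammingNorm_coe_finset {α β : Type*} [Zero β] [DecidableEq β] (E : Finset α)
    (x : α → β) : hammingNorm (fun e : E => x e) = #(E.filter (x · ≠ 0)) := by
  rw [hammingNorm, univ_eq_attach, filter_attach (x · ≠ 0), card_map, card_attach]

theorem ceil_ceil_half_div (d b : ℕ) : ((d + 1) / 2 + b - 1) / b = (d + 2 * b - 1) / (2 * b) := by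
  rw [← Nat.div_div_eq_div_mul]
  congr 1
  omega

section BinaryCode

variable {ι : Type*} [Fintype ι]

theorem hammingNorm_add_hammingNorm_add (x c : ι → ZMod 2) :
    hammingNorm x + hammingNorm (x + c) = hammingNorm c + 2 * #{i | c i = 0 ∧ x i ≠ 0} := by
  have key : ∀ a b : ZMod 2, ((if a ≠ 0 then 1 else 0) + if a + b ≠ 0 then 1 else 0) =
      (if b ≠ 0 then 1 else 0) + 2 * if b = 0 ∧ a ≠ 0 then 1 else 0 := by decide
  simp only [hammingNorm, card_filter, ← sum_add_distrib, mul_sum, Pi.add_apply]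
  exact sum_congr rfl fun i _ => key (x i) (c i)

theorem hammingNorm_restrict_zeroSet (c x : ι → ZMod 2) :
    hammingNorm (fun j : {i // c i = 0} => x j) = #{i | c i = 0 ∧ x i ≠ 0} := by
  simp only [hammingNorm, ← Fintype.card_subtype]
  exact Fintype.card_congr (Equiv.subtypeSubtypeEquivSubtypeInter (c · = 0) (x · ≠ 0))

theorem card_zeroSet_add_hammingNorm (c : ι → ZMod 2) :
    Fintype.card {i // c i = 0} + hammingNorm c = Fintype.card ι := by
  rw [Fintype.card_subtype, hammingNorm, card_filter_add_card_filter_not]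
  rfl

def residualCode (C : Submodule (ZMod 2) (ι → ZMod 2)) (c : ι → ZMod 2) :
    Submodule (ZMod 2) ({i // c i = 0} → ZMod 2) :=
  C.map (LinearMap.funLeft (ZMod 2) (ZMod 2) Subtype.val)

variable {C : Submodule (ZMod 2) (ι → ZMod 2)} {c : ι → ZMod 2}

theorem exists_mem_ne_zero_forall_hammingNorm_le (hC : C ≠ ⊥) :
    ∃ c ∈ C, c ≠ 0 ∧ ∀ x ∈ C, x ≠ 0 → hammingNorm c ≤ hammingNorm x := by
  obtain ⟨c, ⟨hc, hc0⟩, hmin⟩ := Set.exists_min_image {x | x ∈ C ∧ x ≠ 0} hammingNorm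
    (Set.toFinite _) ((Submodule.ne_bot_iff C).mp hC)
  exact ⟨c, hc, hc0, fun x hx hx0 => hmin x ⟨hx, hx0⟩⟩

section MinimumWeight

variable (hc : c ∈ C) (hmin : ∀ x ∈ C, x ≠ 0 → hammingNorm c ≤ hammingNorm x)
include hc hmin

theorem eq_zero_or_eq_of_support_subset (hc0 : c ≠ 0) {x : ι → ZMod 2} (hx : x ∈ C)
    (hxc : Function.support x ⊆ Function.support c) : x = 0 ∨ x = c := by
  have hsum := hammingNorm_add_hammingNorm_add x c
  rw [filter_false_of_mem fun i _ h => hxc h.2 h.1, card_empty] at hsum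
  by_contra! hne
  have hxc0 : x + c ≠ 0 := by rw [← ZModModule.sub_eq_add, sub_ne_zero]; exact hne.2
  have h1 := hmin x hx hne.1
  have h2 := hmin (x + c) (C.add_mem hx hc) hxc0
  have h3 := hammingNorm_pos_iff.mpr hc0
  omega

theorem finrank_le_finrank_residualCode_add_one (hc0 : c ≠ 0) :
    finrank (ZMod 2) C ≤ finrank (ZMod 2) (residualCode C c) + 1 := by
  set π := (LinearMap.funLeft (ZMod 2) (ZMod 2) (Subtype.val : {i // c i = 0} → ι)).domRestrict C
  have hker : LinearMap.ker π ≤ (ZMod 2) ∙ (⟨c, hc⟩ : C) := by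
    intro x hx
    have hsupp : Function.support (x : ι → ZMod 2) ⊆ Function.support c :=
      Function.support_subset_iff'.mpr fun i hi => congrFun hx ⟨i, Function.notMem_support.mp hi⟩
    rcases eq_zero_or_eq_of_support_subset hc hmin hc0 x.2 hsupp with h | h
    · rw [(Subtype.ext h : x = 0)]
      exact zero_mem _
    · rw [(Subtype.ext h : x = ⟨c, hc⟩)]
      exact mem_span_singleton_self _
  have hrank := LinearMap.finrank_range_add_finrank_ker π
  have hker_le : finrank (ZMod 2) (LinearMap.ker π) ≤ 1 :=
    (finrank_mono hker).trans_eq (finrank_span_singleton (by simpa [Subtype.ext_iff] using hc0))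
  rw [LinearMap.range_domRestrict] at hrank
  unfold residualCode
  omega

theorem hammingNorm_le_two_mul_of_mem_residualCode {y : {i // c i = 0} → ZMod 2}
    (hy : y ∈ residualCode C c) (hy0 : y ≠ 0) : hammingNorm c ≤ 2 * hammingNorm y := by
  obtain ⟨x, hx, rfl⟩ := hy
  have hx0 : x ≠ 0 := by rintro rfl; exact hy0 rfl
  have hxc0 : x + c ≠ 0 := by
    rw [← ZModModule.sub_eq_add, sub_ne_zero]
    rintro rfl
    exact hy0 (funext fun j => j.2)
  have hsum := hammingNorm_add_hammingNorm_add x c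
  have h1 := hmin x hx hx0
  have h2 := hmin (x + c) (C.add_mem hx hc) hxc0
  have hres : hammingNorm (LinearMap.funLeft (ZMod 2) (ZMod 2) Subtype.val x) = _ :=
    hammingNorm_restrict_zeroSet c x
  omega

end MinimumWeight

end BinaryCode

theorem sum_ceil_div_two_pow_le_card (k : ℕ) :
    ∀ {ι : Type*} [Fintype ι] (C : Submodule (ZMod 2) (ι → ZMod 2)) {d : ℕ},
      k ≤ finrank (ZMod 2) C → (∀ x ∈ C, x ≠ 0 → d ≤ hammingNorm x) →
      ∑ i ∈ range k, (d + 2 ^ i - 1) / 2 ^ i ≤ Fintype.card ι := by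
  induction k with
  | zero => simp
  | succ k ih =>
    intro ι _ C d hk hd
    have hC : C ≠ ⊥ := by
      rintro rfl
      simp at hk
    obtain ⟨c, hc, hc0, hmin⟩ := exists_mem_ne_zero_forall_hammingNorm_le hC
    have hdc := hd c hc hc0
    have hres := ih (residualCode C c) (d := (d + 1) / 2)
      (by have := finrank_le_finrank_residualCode_add_one hc hmin hc0; omega)
      fun y hy hy0 => by
        have := hammingNorm_le_two_mul_of_mem_residualCode hc hmin hy hy0
        omega
    have hcard := card_zeroSet_add_hammingNorm c
    simp only [sum_range_succ', pow_succ', ← ceil_ceil_half_div, pow_zero, Nat.div_one]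
    omega

section DualCode

variable {K V ι : Type*} [Field K] [AddCommGroup V] [Module K V]

def dualCode (v : ι → V) : Submodule K (ι → K) :=
  LinearMap.range (LinearMap.pi fun i => Dual.eval K V (v i))

theorem ker_pi_dual_eval (v : ι → V) :
    LinearMap.ker (LinearMap.pi fun i => Dual.eval K V (v i)) =
      (span K (Set.range v)).dualAnnihilator := by
  refine SetLike.coe_injective ?_
  rw [coe_dualAnnihilator_span]
  ext f
  simp [funext_iff, Set.range_subset_iff]

theorem finrank_dualCode [FiniteDimensional K V] (v : ι → V) :
    finrank K (dualCode (K := K) v) = finrank K (span K (Set.range v)) := by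
  have h1 := LinearMap.finrank_range_add_finrank_ker (LinearMap.pi fun i => Dual.eval K V (v i))
  have h2 := Subspace.finrank_add_finrank_dualAnnihilator_eq (span K (Set.range v))
  rw [ker_pi_dual_eval, Subspace.dual_finrank_eq] at h1
  unfold dualCode
  omega

theorem span_image_diff_lt {s t : Set ι} {v : ι → V} (f : Dual K V)
    (hf : ∀ i ∈ s \ t, f (v i) = 0) {i : ι} (hi : i ∈ s) (hfi : f (v i) ≠ 0) :
    span K (v '' (s \ t)) < span K (v '' s) := by
  have hker : span K (v '' (s \ t)) ≤ LinearMap.ker f := by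
    rw [span_le, Set.image_subset_iff]
    exact hf
  exact SetLike.lt_iff_le_and_exists.mpr ⟨span_mono (Set.image_mono Set.sdiff_subset),
    v i, subset_span (Set.mem_image_of_mem v hi), fun hmem => hfi (hker hmem)⟩

end DualCode

namespace FinMatroid

variable {α K V : Type*} [DecidableEq α] [Field K] [DecidableEq K] [AddCommGroup V]
  [Module K V] [FiniteDimensional K V]

theorem le_hammingNorm_of_mem_dualCode (M : FinMatroid α) {φ : α → V}
    (hφ : ∀ A ⊆ M.E, M.rk A = finrank K (span K (φ '' A))) {d : ℕ}
    (hd : ∀ X ⊆ M.E, M.rk (M.E \ X) < M.rk M.E → d ≤ #X) {x : M.E → K}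
    (hx : x ∈ dualCode fun e : M.E => φ e) (hx0 : x ≠ 0) : d ≤ hammingNorm x := by
  obtain ⟨f, rfl⟩ := hx
  obtain ⟨⟨e, he⟩, hfe⟩ := Function.ne_iff.mp hx0
  set X := M.E.filter fun e => f (φ e) ≠ 0
  have hlt : M.rk (M.E \ X) < M.rk M.E := by
    rw [hφ _ sdiff_subset, hφ _ subset_rfl, coe_sdiff]
    exact finrank_lt_finrank_of_lt (span_image_diff_lt f (by simp +contextual [X]) he hfe)
  calc d ≤ #X := hd X (filter_subset _ _) hlt
    _ = hammingNorm _ := (hammingNorm_coe_finset M.E fun e => f (φ e)).symm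

end FinMatroid

theorem griesmer_bound_general {α : Type*} [DecidableEq α] (M : FinMatroid α)
    (hb : M.IsBinary) (d : ℕ) (hd : M.IsMinDist d) :
    ∑ i ∈ Finset.range (M.rk M.E), (d + 2 ^ i - 1) / 2 ^ i ≤ M.E.card := by
  obtain ⟨m, φ, hφ⟩ := hb
  have hrk : M.rk M.E = finrank (ZMod 2) (dualCode (K := ZMod 2) fun e : M.E => φ e) := by
    rw [finrank_dualCode, hφ M.E subset_rfl, Set.image_eq_range]
    rfl
  simpa using sum_ceil_div_two_pow_le_card _ (dualCode fun e : M.E => φ e) hrk.le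
    fun x hx hx0 => M.le_hammingNorm_of_mem_dualCode hφ hd.2 hx hx0

/-- Griesmer bound for binary matroids: If `M` is binary with
`n = |E|`, rank `k ≥ 1` and minimum distance `d`, then
`n ≥ Σ_{i=0}^{k−1} ⌈d / 2^i⌉`. -/
theorem griesmer_bound {α : Type*} [DecidableEq α] (M : FinMatroid α)
    (hb : M.IsBinary) (hk : 1 ≤ M.rk M.E) (d : ℕ) (hd : M.IsMinDist d) :
    ∑ i ∈ Finset.range (M.rk M.E), (d + 2 ^ i - 1) / 2 ^ i ≤ M.E.card :=
  griesmer_bound_general M hb d hd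
end
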